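/- arXiv:2005.13839 — 2 statements merged into one kernel-verified Lean document; each statement's English description precedes it below -/
import Mathlib

section
/- Let α ≥ 1. Then for every t in the interval [1 − 1/√2, 1/√2], (1/(t^{α+1}(1−t)))·((1 − 2t²)/(2(α+1)) + (2t − 1)/(α+2)) ≤ 2^{α/2+1}/((√2−1)^α (α+1)(α+2)), with equality iff t = 1 − 1/√2. -/
/-!
Put `t₀ = 1 - 1/√2`, the smaller root of `2t² - 4t + 1`, so that the right-hand side equals
`2 / (t₀^α (α+1)(α+2))`. Clearing denominators, the claim becomes
`t₀^α M(t) ≤ 2 t^(α+1) (1 - t)` for the numerator `M(t) = (α+2)(1-2t²)/2 + (α+1)(2t-1)`.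
Bernoulli's inequality bounds `t^α t₀` below by `t₀^α (t₀ + α(t - t₀))`, and modulo the quadratic
relation for `t₀` one has the identity
`2 (t₀ + α(t - t₀)) t(1 - t) - t₀ M(t) = 2α (t - t₀)² (1 - t₀/2 - t)`,
whose right-hand side is positive for `t₀ < t ≤ 1 - t₀`.
-/

open Real

theorem Real.rpow_mul_add_mul_sub_le_rpow_mul {s t α : ℝ} (hs : 0 < s) (ht : 0 ≤ t)
    (hα : 1 ≤ α) : s ^ α * (s + α * (t - s)) ≤ t ^ α * s := by
  have hbernoulli := one_add_mul_self_le_rpow_one_add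
    (by linarith [div_nonneg ht hs.le] : -1 ≤ t / s - 1) hα
  rw [add_sub_cancel, div_rpow ht hs.le] at hbernoulli
  have hsα : 0 < s ^ α := rpow_pos_of_pos hs α
  calc s ^ α * (s + α * (t - s)) = (1 + α * (t / s - 1)) * (s ^ α * s) := by
        field_simp
    _ ≤ t ^ α / s ^ α * (s ^ α * s) := by gcongr
    _ = t ^ α * s := by field_simp

theorem one_sub_one_div_sqrt_two_rpow_mul (α : ℝ) :
    (1 - 1 / √2) ^ α * 2 ^ (α / 2) = (√2 - 1) ^ α := by
  have hsqrt : 1 < √2 := by rw [lt_sqrt zero_le_one]; norm_num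
  rw [rpow_div_two_eq_sqrt α zero_le_two,
    ← mul_rpow (by rw [sub_nonneg, div_le_one (by positivity)]; exact hsqrt.le) (sqrt_nonneg 2)]
  congr 1
  field_simp

noncomputable def planarNumerator (α t : ℝ) : ℝ :=
  (α + 2) * (1 - 2 * t ^ 2) / 2 + (α + 1) * (2 * t - 1)

noncomputable def planarPower (α t : ℝ) : ℝ :=
  (1 / (t ^ (α + 1) * (1 - t))) * ((1 - 2 * t ^ 2) / (2 * (α + 1)) + (2 * t - 1) / (α + 2))

section

variable {α t t₀ : ℝ}

theorem planarPower_eq_planarNumerator_div (h₁ : α + 1 ≠ 0) (h₂ : α + 2 ≠ 0) :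
    planarPower α t = planarNumerator α t / ((α + 1) * (α + 2) * (t ^ (α + 1) * (1 - t))) := by
  unfold planarPower planarNumerator
  field_simp

theorem mul_planarNumerator_eq (ht₀ : 2 * t₀ ^ 2 - 4 * t₀ + 1 = 0) :
    t₀ * planarNumerator α t =
      2 * (t₀ + α * (t - t₀)) * (t * (1 - t)) - 2 * α * (t - t₀) ^ 2 * (1 - t₀ / 2 - t) := by
  unfold planarNumerator
  linear_combination (-α * t₀ / 2) * ht₀

theorem planarNumerator_of_quadratic (ht₀ : 2 * t₀ ^ 2 - 4 * t₀ + 1 = 0) :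
    planarNumerator α t₀ = 2 * (t₀ * (1 - t₀)) := by
  unfold planarNumerator
  linear_combination (-α / 2) * ht₀

theorem rpow_mul_planarNumerator_lt (ht₀ : 2 * t₀ ^ 2 - 4 * t₀ + 1 = 0) (h0 : 0 < t₀)
    (hα : 1 ≤ α) (hlt : t₀ < t) (hle : t ≤ 1 - t₀) :
    t₀ ^ α * planarNumerator α t < 2 * (t ^ (α + 1) * (1 - t)) := by
  have ht : 0 < t := h0.trans hlt
  have hgap : 0 < 2 * α * (t - t₀) ^ 2 * (1 - t₀ / 2 - t) := by
    have : 0 < t - t₀ := by linarith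
    have : 0 < 1 - t₀ / 2 - t := by linarith
    positivity
  have hbernoulli := rpow_mul_add_mul_sub_le_rpow_mul h0 ht.le hα
  have h1t : 0 < t * (1 - t) := mul_pos ht (by linarith)
  refine lt_of_mul_lt_mul_left ?_ h0.le
  calc t₀ * (t₀ ^ α * planarNumerator α t)
      = t₀ ^ α * (2 * (t₀ + α * (t - t₀)) * (t * (1 - t)))
        - t₀ ^ α * (2 * α * (t - t₀) ^ 2 * (1 - t₀ / 2 - t)) := by
        rw [mul_left_comm, mul_planarNumerator_eq ht₀]; ring
    _ < 2 * (t * (1 - t)) * (t₀ ^ α * (t₀ + α * (t - t₀))) := by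
        linarith [mul_pos (rpow_pos_of_pos h0 α) hgap]
    _ ≤ 2 * (t * (1 - t)) * (t ^ α * t₀) := by gcongr
    _ = t₀ * (2 * (t ^ (α + 1) * (1 - t))) := by rw [rpow_add_one ht.ne']; ring

theorem planarPower_lt_of_quadratic (ht₀ : 2 * t₀ ^ 2 - 4 * t₀ + 1 = 0) (h0 : 0 < t₀)
    (hα : 1 ≤ α) (hlt : t₀ < t) (hle : t ≤ 1 - t₀) :
    planarPower α t < 2 / (t₀ ^ α * ((α + 1) * (α + 2))) := by
  have ht : 0 < t := h0.trans hlt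
  have hden : 0 < t ^ (α + 1) * (1 - t) :=
    mul_pos (rpow_pos_of_pos ht _) (by linarith)
  have hc : 0 < (α + 1) * (α + 2) := by positivity
  rw [planarPower_eq_planarNumerator_div (by linarith) (by linarith),
    div_lt_div_iff₀ (by positivity) (mul_pos (rpow_pos_of_pos h0 α) hc)]
  have := rpow_mul_planarNumerator_lt ht₀ h0 hα hlt hle
  calc planarNumerator α t * (t₀ ^ α * ((α + 1) * (α + 2)))
      = t₀ ^ α * planarNumerator α t * ((α + 1) * (α + 2)) := by ring
    _ < 2 * (t ^ (α + 1) * (1 - t)) * ((α + 1) * (α + 2)) := by gcongr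
    _ = 2 * ((α + 1) * (α + 2) * (t ^ (α + 1) * (1 - t))) := by ring

theorem planarPower_of_quadratic (ht₀ : 2 * t₀ ^ 2 - 4 * t₀ + 1 = 0) (h0 : 0 < t₀)
    (h1 : t₀ < 1) (hα : -1 < α) :
    planarPower α t₀ = 2 / (t₀ ^ α * ((α + 1) * (α + 2))) := by
  have : 0 < t₀ ^ α := rpow_pos_of_pos h0 α
  have : 0 < 1 - t₀ := by linarith
  rw [planarPower_eq_planarNumerator_div (by linarith) (by linarith),
    planarNumerator_of_quadratic ht₀, rpow_add_one h0.ne']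
  field_simp

end

theorem planar_power_max (α : ℝ) (hα : 1 ≤ α) :
    ∀ t ∈ Set.Icc (1 - 1 / Real.sqrt 2) (1 / Real.sqrt 2),
      (1 / (t ^ (α + 1) * (1 - t))) *
          ((1 - 2 * t ^ 2) / (2 * (α + 1)) + (2 * t - 1) / (α + 2)) ≤
        2 ^ (α / 2 + 1) / ((Real.sqrt 2 - 1) ^ α * (α + 1) * (α + 2)) ∧
      ((1 / (t ^ (α + 1) * (1 - t))) *
          ((1 - 2 * t ^ 2) / (2 * (α + 1)) + (2 * t - 1) / (α + 2)) =
        2 ^ (α / 2 + 1) / ((Real.sqrt 2 - 1) ^ α * (α + 1) * (α + 2)) ↔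
        t = 1 - 1 / Real.sqrt 2) := by
  rintro t ⟨hlow, hhigh⟩
  set t₀ := 1 - 1 / √2 with ht₀_def
  have hsqrt : 1 < √2 := by rw [lt_sqrt zero_le_one]; norm_num
  have ht₀ : 2 * t₀ ^ 2 - 4 * t₀ + 1 = 0 := by
    have hsq : √2 ^ 2 = 2 := sq_sqrt zero_le_two
    rw [ht₀_def]; field_simp; linear_combination -hsq
  have h0 : 0 < t₀ := by rw [sub_pos, div_lt_one (by positivity)]; exact hsqrt
  have hbound : 2 ^ (α / 2 + 1) / ((√2 - 1) ^ α * (α + 1) * (α + 2)) =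
      2 / (t₀ ^ α * ((α + 1) * (α + 2))) := by
    rw [← one_sub_one_div_sqrt_two_rpow_mul, ← ht₀_def, rpow_add_one two_ne_zero]
    have : 0 < (2 : ℝ) ^ (α / 2) := by positivity
    field_simp
  change planarPower α t ≤ _ ∧ (planarPower α t = _ ↔ _)
  rw [hbound]
  rcases hlow.eq_or_lt with rfl | hlt
  · rw [planarPower_of_quadratic ht₀ h0 (by linarith) (by linarith)]
    exact ⟨le_rfl, iff_of_true rfl rfl⟩
  · have := planarPower_lt_of_quadratic ht₀ h0 hα hlt (by linarith)
    exact ⟨this.le, iff_of_false this.ne hlt.ne'⟩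
end

section
/- With c > 0, m ∈ [−c, c], r_m = (c−m)/2 and t_m = (−(c−m) + √(c²+m²))/(2m) for m ≠ 0 (t_0 = 1/2), the map m ↦ t_m is a bijection from [−c, c] onto [1 − 1/√2, 1/√2]; in particular t_{−c} = 1 − 1/√2 and t_c = 1/√2. -/
/-!
Rationalizing the numerator gives `t_m = c / (c + (√(c² + m²) - m))`, valid also at `m = 0`.
Since `√(c² + m²) - m` is strictly decreasing and the denominator is positive, `m ↦ t_m` is a
continuous strictly increasing function, hence a bijection of `[-c, c]` onto `[t_{-c}, t_c]`
by the intermediate value theorem; and `√(c² + c²) = √2 c` gives the endpoint values.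
-/

open Set Real

theorem StrictMonoOn.bijOn_Icc {α β : Type*} [ConditionallyCompleteLinearOrder α]
    [DenselyOrdered α] [TopologicalSpace α] [OrderTopology α] [LinearOrder β]
    [TopologicalSpace β] [OrderClosedTopology β] {f : α → β} {a b : α} (hab : a ≤ b)
    (hf : StrictMonoOn f (Icc a b)) (hf' : ContinuousOn f (Icc a b)) :
    BijOn f (Icc a b) (Icc (f a) (f b)) :=
  ⟨hf.monotoneOn.mapsTo_Icc, hf.injOn,
    hf'.surjOn_Icc (left_mem_Icc.2 hab) (right_mem_Icc.2 hab)⟩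

section

variable {c : ℝ}

lemma lt_sqrt_sq_add_sq (hc : c ≠ 0) (m : ℝ) : m < √(c ^ 2 + m ^ 2) :=
  lt_sqrt_of_sq_lt (lt_add_of_pos_left _ (sq_pos_of_ne_zero hc))

lemma neg_lt_sqrt_sq_add_sq (hc : c ≠ 0) (m : ℝ) : -m < √(c ^ 2 + m ^ 2) := by
  simpa using lt_sqrt_sq_add_sq hc (-m)

lemma strictAnti_sqrt_sq_add_sq_sub (hc : c ≠ 0) :
    StrictAnti fun m ↦ √(c ^ 2 + m ^ 2) - m := by
  intro a b hab
  have ha := sq_sqrt (by positivity : 0 ≤ c ^ 2 + a ^ 2)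
  have hb := sq_sqrt (by positivity : 0 ≤ c ^ 2 + b ^ 2)
  nlinarith [lt_sqrt_sq_add_sq hc a, lt_sqrt_sq_add_sq hc b,
    neg_lt_sqrt_sq_add_sq hc a, neg_lt_sqrt_sq_add_sq hc b]

/-- `t_m` with its numerator rationalized. -/
noncomputable def tm (c m : ℝ) : ℝ := c / (c + (√(c ^ 2 + m ^ 2) - m))

lemma tm_denom_pos (hc : 0 < c) (m : ℝ) : 0 < c + (√(c ^ 2 + m ^ 2) - m) := by
  linarith [lt_sqrt_sq_add_sq hc.ne' m]

lemma tm_eq_of_ne_zero (hc : 0 < c) {m : ℝ} (hm : m ≠ 0) :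
    tm c m = (-(c - m) + √(c ^ 2 + m ^ 2)) / (2 * m) := by
  have hs := sq_sqrt (by positivity : 0 ≤ c ^ 2 + m ^ 2)
  rw [tm, div_eq_div_iff (tm_denom_pos hc m).ne' (by positivity)]
  linear_combination -hs

lemma tm_zero (hc : 0 < c) : tm c 0 = 1 / 2 := by
  rw [tm, zero_pow two_ne_zero, add_zero, sqrt_sq hc.le, sub_zero]
  field_simp [hc.ne']
  ring

lemma tm_neg_self (hc : 0 < c) : tm c (-c) = 1 - 1 / √2 := by
  have h2 : √2 ^ 2 = 2 := sq_sqrt zero_le_two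
  rw [tm, neg_sq, ← two_mul, sqrt_mul zero_le_two, sqrt_sq hc.le,
    show c + (√2 * c - -c) = (2 + √2) * c by ring, div_mul_cancel_right₀ hc.ne']
  field_simp
  linear_combination -h2

lemma tm_self (hc : 0 < c) : tm c c = 1 / √2 := by
  rw [tm, ← two_mul, sqrt_mul zero_le_two, sqrt_sq hc.le]
  field_simp
  ring

lemma strictMono_tm (hc : 0 < c) : StrictMono (tm c) := fun _ b hab ↦
  div_lt_div_of_pos_left hc (tm_denom_pos hc b)
    (add_lt_add_right (strictAnti_sqrt_sq_add_sq_sub hc.ne' hab) c)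

lemma continuous_tm (hc : 0 < c) : Continuous (tm c) :=
  continuous_const.div (by fun_prop) fun m ↦ (tm_denom_pos hc m).ne'

end

theorem tm_bijective (c : ℝ) (hc : 0 < c)
    (T : ℝ → ℝ)
    (hT : ∀ m, T m = if m = 0 then 1/2
      else (-(c - m) + Real.sqrt (c ^ 2 + m ^ 2)) / (2 * m)) :
    Set.BijOn T (Set.Icc (-c) c)
        (Set.Icc (1 - 1 / Real.sqrt 2) (1 / Real.sqrt 2)) ∧
      T (-c) = 1 - 1 / Real.sqrt 2 ∧ T c = 1 / Real.sqrt 2 := by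
  obtain rfl : T = tm c := by
    funext m
    rw [hT]
    split_ifs with hm
    · rw [hm, tm_zero hc]
    · exact (tm_eq_of_ne_zero hc hm).symm
  rw [← tm_neg_self hc, ← tm_self hc]
  exact ⟨(strictMono_tm hc).strictMonoOn _ |>.bijOn_Icc (by linarith)
    (continuous_tm hc).continuousOn, rfl, rfl⟩
end
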